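/- Let R be a commutative ring with total quotient ring K = T(R), and let r ∈ R be a non-zerodivisor of R. Then the assignment f + gρ ↦ (f, f + rg) defines a ring isomorphism from Int(R[ρ]) = {f̄ + ḡρ ∈ K[ρ][X] : f, g ∈ K[X] and the polynomial maps R[ρ] into R[ρ]} onto the subring {(u, v) ∈ Int(R; r) × Int(R; r) : v − u ∈ r·Int(R)} of K[X] × K[X]. Equivalently, for f, g ∈ K[X], f + gρ ∈ Int(R[ρ]) if and only if f ∈ Int(R; r), f + rg ∈ Int(R; r), and g ∈ Int(R). -/

import Mathlib

open Polynomial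

/-- The ring `S[ρ] = S[T]/(T(T−s))`. -/
abbrev RhoRing (S : Type*) [CommRing S] (s : S) : Type _ :=
  Polynomial S ⧸ Ideal.span {(X * (X - Polynomial.C s) : Polynomial S)}

/-- `IsDeltaWitness f G` says that `G = G(X,Y) ∈ S[X][Y]` is the (unique) two-variable
polynomial with `f(X+Y) − f(X) = Y·G(X,Y)`; then `Δ_c f = G(X,c)` for `c ∈ S`. -/
def IsDeltaWitness {S : Type*} [CommRing S] (f : Polynomial S)
    (G : Polynomial (Polynomial S)) : Prop :=
  f.eval₂ (Polynomial.C.comp Polynomial.C) (Polynomial.C X + X) = Polynomial.C f + X * G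

/-- The set `Int(R)` of integer-valued polynomials on `R`, over `K = T(R) = FractionRing R`. -/
def IntPoly (R : Type*) [CommRing R] : Set (Polynomial (FractionRing R)) :=
  {f | ∀ a : R, f.eval (algebraMap R (FractionRing R) a) ∈ Set.range (algebraMap R (FractionRing R))}

/-- The set `Int(R; r) = {f ∈ Int(R) : y·Δ_{yr}f ∈ Int(R) for all y ∈ R}`. -/
def IntPolyRho (R : Type*) [CommRing R] (r : R) : Set (Polynomial (FractionRing R)) :=
  {f | f ∈ IntPoly R ∧ ∀ y : R, ∀ G, IsDeltaWitness f G →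
    Polynomial.C (algebraMap R (FractionRing R) y) *
      G.eval (Polynomial.C (algebraMap R (FractionRing R) (y * r))) ∈ IntPoly R}

/-- The subring `R[ρ]` of `K[ρ]`, `K = T(R)`: the image of `R[T]`. -/
noncomputable def RhoBase (R : Type*) [CommRing R] (r : R) :
    Subring (RhoRing (FractionRing R) (algebraMap R (FractionRing R) r)) :=
  ((Ideal.Quotient.mk _ :
      Polynomial (FractionRing R) →+*
        RhoRing (FractionRing R) (algebraMap R (FractionRing R) r)).comp
    (mapRingHom (algebraMap R (FractionRing R)))).range

/-! Since `r` is a unit of `K`, evaluating `ρ` at the two roots `0` and `r` of `T(T - r)` identifies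
`K[ρ]` with `K × K`; under it `R[ρ]` becomes `{(a, b) : a ∈ R, b - a ∈ rR}` and
`(f + gρ)(x + yρ)` becomes `(f(x), (f + rg)(x + yr))`. On the other side
`r · yΔ_{yr}h(x) = h(x + yr) - h(x)`, so `h ∈ Int(R; r)` iff `h ∈ Int(R)` and
`h(x + yr) ≡ h(x) mod rR`. What is left is bookkeeping of congruences mod `rR`; the case `y = 0`
gives `r g(x) ∈ rR`, that is `g ∈ Int(R)`. -/

namespace RhoRing

variable {S : Type*} [CommRing S] {s : S}

noncomputable def evalAt (c : S) (hc : c * (c - s) = 0) : RhoRing S s →+* S :=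
  Ideal.Quotient.lift _ (evalRingHom c) fun p hp => by
    obtain ⟨q, rfl⟩ := Ideal.mem_span_singleton'.mp hp
    simp [hc]

@[simp]
lemma evalAt_mk (c : S) (hc : c * (c - s) = 0) (p : S[X]) :
    evalAt c hc (Ideal.Quotient.mk _ p) = p.eval c :=
  Ideal.Quotient.lift_mk _ _ _

lemma evalAt_eval_map_add_mul_rho (c : S) (hc : c * (c - s) = 0) (f g : S[X]) (a b : S) :
    evalAt c hc
        ((f.map ((Ideal.Quotient.mk _).comp C) + g.map ((Ideal.Quotient.mk _).comp C) *
            C (Ideal.Quotient.mk _ X)).eval (Ideal.Quotient.mk _ (C a + C b * X))) =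
      (f + C c * g).eval (a + b * c) := by
  have hC : (evalAt c hc).comp ((Ideal.Quotient.mk _).comp C) = RingHom.id S := by
    ext; simp
  have heval (p : S[X]) : evalAt c hc ((p.map ((Ideal.Quotient.mk _).comp C)).eval
      (Ideal.Quotient.mk _ (C a + C b * X))) = p.eval (a + b * c) := by
    rw [eval_map, hom_eval₂, hC, evalAt_mk]
    simp [eval₂_id]
  rw [eval_add, eval_mul, eval_C, map_add, map_mul, heval, heval, evalAt_mk, eval_X,
    eval_add, eval_mul, eval_C]
  ring

lemma eq_of_evalAt_eq (hs : IsUnit s) {z w : RhoRing S s}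
    (h₀ : evalAt 0 (zero_mul _) z = evalAt 0 (zero_mul _) w)
    (hₛ : evalAt s (by rw [sub_self, mul_zero]) z = evalAt s (by rw [sub_self, mul_zero]) w) :
    z = w := by
  obtain ⟨p, rfl⟩ := Ideal.Quotient.mk_surjective z
  obtain ⟨q, rfl⟩ := Ideal.Quotient.mk_surjective w
  simp only [evalAt_mk] at h₀ hₛ
  rw [Ideal.Quotient.eq, Ideal.mem_span_singleton]
  have hcop : IsCoprime (X : S[X]) (X - C s) := by
    simpa using isCoprime_X_sub_C_of_isUnit_sub (a := 0) (b := s) (by simpa using hs.neg)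
  refine hcop.mul_dvd ?_ ?_
  · rw [X_dvd_iff, coeff_zero_eq_eval_zero, eval_sub, h₀, sub_self]
  · rw [dvd_iff_isRoot, IsRoot, eval_sub, hₛ, sub_self]

end RhoRing

lemma exists_isDeltaWitness {S : Type*} [CommRing S] (f : S[X]) : ∃ G, IsDeltaWitness f G := by
  obtain ⟨G, hG⟩ := sub_dvd_eval_sub (C X + X : S[X][X]) (C X) (f.map (C.comp C))
  have hf : (f.map (C.comp C)).eval (C X) = C f := by
    rw [eval_map, ← hom_eval₂, eval₂_C_X]
  rw [add_sub_cancel_left, hf] at hG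
  exact ⟨G, by rw [IsDeltaWitness, ← eval_map]; linear_combination hG⟩

lemma IsDeltaWitness.eval_add {S : Type*} [CommRing S] {f : S[X]} {G : S[X][X]}
    (hG : IsDeltaWitness f G) (x c : S) :
    f.eval (x + c) = f.eval x + c * (G.eval (C c)).eval x := by
  rw [IsDeltaWitness, ← eval_map] at hG
  have h := congrArg (fun p => (p.eval (C c)).eval x) hG
  have hid : (evalRingHom x).comp ((evalRingHom (C c)).comp (C.comp C)) = RingHom.id S := by
    ext; simp
  simp only [eval_map] at h
  rw [← coe_evalRingHom (C c), hom_eval₂, ← coe_evalRingHom x, hom_eval₂, hid] at h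
  simpa [add_comm] using h

section IntegerValued

variable {R : Type*} [CommRing R] {r : R}

local notation "φ" => algebraMap R (FractionRing R)

def ShiftCongr (r : R) (h : (FractionRing R)[X]) : Prop :=
  ∀ x y : R, ∃ b : R, h.eval (φ x + φ y * φ r) - h.eval (φ x) = φ r * φ b

lemma mem_intPolyRho_iff (hr : r ∈ nonZeroDivisors R) {h : (FractionRing R)[X]} :
    h ∈ IntPolyRho R r ↔ h ∈ IntPoly R ∧ ShiftCongr r h := by
  have hr' : IsUnit (φ r) := IsLocalization.map_units _ ⟨r, hr⟩
  have key (G : (FractionRing R)[X][X]) (hG : IsDeltaWitness h G) (x y b : R) :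
      (C (φ y) * G.eval (C (φ (y * r)))).eval (φ x) = φ b ↔
        h.eval (φ x + φ y * φ r) - h.eval (φ x) = φ r * φ b := by
    rw [map_mul, hG.eval_add, add_sub_cancel_left, eval_mul, eval_C, ← hr'.mul_right_inj]
    constructor <;> intro H <;> linear_combination H
  refine and_congr_right fun _ => ⟨fun H x y => ?_, fun H y G hG x => ?_⟩
  · obtain ⟨G, hG⟩ := exists_isDeltaWitness h
    obtain ⟨b, hb⟩ := H y G hG x
    exact ⟨b, (key G hG x y b).1 hb.symm⟩
  · obtain ⟨b, hb⟩ := H x y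
    exact ⟨b, ((key G hG x y b).2 hb).symm⟩

lemma add_C_mul_mem_intPoly {f g : (FractionRing R)[X]} (hf : f ∈ IntPoly R)
    (hg : g ∈ IntPoly R) : f + C (φ r) * g ∈ IntPoly R := by
  intro x
  obtain ⟨a, ha⟩ := hf x
  obtain ⟨b, hb⟩ := hg x
  exact ⟨a + r * b, by simp [ha, hb]⟩

lemma shiftCongr_add_C_mul_iff {f g : (FractionRing R)[X]} (hg : g ∈ IntPoly R) :
    ShiftCongr r (f + C (φ r) * g) ↔ ShiftCongr r f := by
  refine forall₂_congr fun x y => ?_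
  obtain ⟨c₁, hc₁⟩ := hg (x + y * r)
  obtain ⟨c₂, hc₂⟩ := hg x
  rw [map_add, map_mul] at hc₁
  have hdiff : (f + C (φ r) * g).eval (φ x + φ y * φ r) - (f + C (φ r) * g).eval (φ x) =
      f.eval (φ x + φ y * φ r) - f.eval (φ x) + φ r * φ (c₁ - c₂) := by
    simp only [eval_add, eval_mul, eval_C, ← hc₁, ← hc₂, map_sub]
    ring
  rw [hdiff]
  constructor
  · rintro ⟨b, hb⟩
    exact ⟨b - (c₁ - c₂), by rw [map_sub]; linear_combination hb⟩
  · rintro ⟨b, hb⟩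
    exact ⟨b + (c₁ - c₂), by rw [map_add]; linear_combination hb⟩

lemma mem_rhoBase_iff (hr : r ∈ nonZeroDivisors R)
    {z : RhoRing (FractionRing R) (φ r)} :
    z ∈ RhoBase R r ↔ RhoRing.evalAt 0 (zero_mul _) z ∈ Set.range φ ∧
      ∃ b : R, RhoRing.evalAt (φ r) (by rw [sub_self, mul_zero]) z -
        RhoRing.evalAt 0 (zero_mul _) z = φ r * φ b := by
  constructor
  · rintro ⟨p, rfl⟩
    simp only [RingHom.comp_apply, coe_mapRingHom, RhoRing.evalAt_mk, eval_map, eval₂_at_zero,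
      eval₂_at_apply]
    obtain ⟨b, hb⟩ := sub_dvd_eval_sub r 0 p
    exact ⟨⟨_, rfl⟩, b, by rw [coeff_zero_eq_eval_zero, ← map_sub, hb, sub_zero, map_mul]⟩
  · rintro ⟨⟨a, ha⟩, b, hb⟩
    refine ⟨C a + C b * X, RhoRing.eq_of_evalAt_eq (IsLocalization.map_units _ ⟨r, hr⟩) ?_ ?_⟩
    · simpa using ha
    · simp only [RingHom.coe_comp, coe_mapRingHom, Function.comp_apply, map_C, map_X, map_add,
        map_mul, RhoRing.evalAt_mk, eval_C, eval_X]
      linear_combination ha - hb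

lemma pullback_conditions_iff (hr : r ∈ nonZeroDivisors R) {f g : (FractionRing R)[X]} :
    (∀ x y : R, f.eval (φ x) ∈ Set.range φ ∧
        ∃ b : R, (f + C (φ r) * g).eval (φ x + φ y * φ r) - f.eval (φ x) = φ r * φ b) ↔
      (f ∈ IntPoly R ∧ ShiftCongr r f) ∧
        (f + C (φ r) * g ∈ IntPoly R ∧ ShiftCongr r (f + C (φ r) * g)) ∧ g ∈ IntPoly R := by
  have hsplit (x y : R) : (f + C (φ r) * g).eval (φ x + φ y * φ r) - f.eval (φ x) =
      (f + C (φ r) * g).eval (φ x + φ y * φ r) - (f + C (φ r) * g).eval (φ x) +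
        φ r * g.eval (φ x) := by
    simp only [eval_add, eval_mul, eval_C]
    ring
  constructor
  · intro H
    have hf : f ∈ IntPoly R := fun x => (H x 0).1
    have hg : g ∈ IntPoly R := fun x => by
      obtain ⟨b, hb⟩ := (H x 0).2
      rw [hsplit, map_zero, zero_mul, add_zero, sub_self, zero_add] at hb
      exact ⟨b, ((IsLocalization.map_units _ ⟨r, hr⟩).mul_left_cancel hb).symm⟩
    have hv : ShiftCongr r (f + C (φ r) * g) := fun x y => by
      obtain ⟨b, hb⟩ := (H x y).2
      obtain ⟨c, hc⟩ := hg x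
      exact ⟨b - c, by rw [map_sub, hc]; linear_combination (hsplit x y).symm.trans hb⟩
    exact ⟨⟨hf, (shiftCongr_add_C_mul_iff hg).1 hv⟩, ⟨add_C_mul_mem_intPoly hf hg, hv⟩, hg⟩
  · rintro ⟨⟨hf, -⟩, ⟨-, hv⟩, hg⟩ x y
    obtain ⟨b, hb⟩ := hv x y
    obtain ⟨c, hc⟩ := hg x
    exact ⟨hf x, b + c, by rw [hsplit, hb, ← hc, map_add]; ring⟩

end IntegerValued

/-- Let `r` be a non-zerodivisor of `R` and `K = T(R)`.  The assignment
`f + gρ ↦ (f, f + rg)` identifies `Int(R[ρ])` with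
`{(u, v) ∈ Int(R; r) × Int(R; r) : v − u ∈ r·Int(R)}`: for `f, g ∈ K[X]`, the polynomial
`F = f̄ + ḡ·ρ` maps `R[ρ]` into `R[ρ]` if and only if `f ∈ Int(R; r)`,
`f + rg ∈ Int(R; r)` and `g ∈ Int(R)`. -/
theorem intPoly_rhoRing_pullback (R : Type*) [CommRing R] (r : R)
    (hr : r ∈ nonZeroDivisors R) (f g : Polynomial (FractionRing R)) :
    (∀ x y : R,
        ((f.map ((Ideal.Quotient.mk _).comp (Polynomial.C (R := FractionRing R))) +
            g.map ((Ideal.Quotient.mk _).comp (Polynomial.C (R := FractionRing R))) *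
              Polynomial.C (Ideal.Quotient.mk _ X)).eval
          (Ideal.Quotient.mk _
            (Polynomial.C (algebraMap R (FractionRing R) x) +
              Polynomial.C (algebraMap R (FractionRing R) y) * X))
          : RhoRing (FractionRing R) (algebraMap R (FractionRing R) r)) ∈ RhoBase R r)
      ↔ f ∈ IntPolyRho R r ∧
          f + Polynomial.C (algebraMap R (FractionRing R) r) * g ∈ IntPolyRho R r ∧
          g ∈ IntPoly R := by
  simp only [mem_rhoBase_iff hr, RhoRing.evalAt_eval_map_add_mul_rho, mem_intPolyRho_iff hr,
    C_0, zero_mul, add_zero, mul_zero]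
  exact pullback_conditions_iff hr
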